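/- Let F be a probability distribution on [0,∞) with density f and monotone hazard rate h(x) = f(x)/(1 − F(x)), and let q ∈ (0,1) be a quantile. If x > 0 satisfies F^{-1}(q) ≤ x, then the hazard rate of F at x satisfies h(x) ≥ −ln(1 − q)/x. -/

import Mathlib

/-! By monotonicity of the hazard rate, on `(-∞, x]` the density is at most `h(x)` times the tail
`S(t) = μ(t, ∞)`, so on `(a, b]` with `b ≤ x` the tail loses at most `h(x) S(a) (b - a)`:
`S(b) ≥ S(a) (1 - h(x) (b - a))`. Chaining these Euler steps along a uniform mesh of `[0, x]` and
refining it gives `S(x) ≥ S(0) e^{-h(x) x} = e^{-h(x) x}`. On the other side `F⁻¹(q) ≤ x` and the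
right continuity of the CDF give `F(x) ≥ q`, i.e. `S(x) ≤ 1 - q`; take logarithms. -/

open MeasureTheory
open scoped ENNReal

noncomputable section

/-- A distribution `μ` on `[0,∞)` with density `f` has monotone hazard rate (MHR):
its hazard rate `h(x) = f(x)/(1 − F(x)) = f(x)/μ(x,∞)` is nondecreasing on the support of `μ`
(i.e. wherever the upper tail still has positive mass). -/
def IsMHR (f : ℝ → ℝ) (μ : Measure ℝ) : Prop :=
  ∀ x y : ℝ, x ≤ y → μ (Set.Ioi y) ≠ 0 →
    f x / (μ (Set.Ioi x)).toReal ≤ f y / (μ (Set.Ioi y)).toReal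

/-- `F⁻¹(q)`: the value of `μ` at quantile `q`, i.e. `min {v : F(v) ≥ q}`. -/
def quantileFn (μ : Measure ℝ) (q : ℝ) : ℝ :=
  sInf {v : ℝ | q ≤ (μ (Set.Iic v)).toReal}

open Set Filter ProbabilityTheory

section Gronwall

variable {S : ℝ → ℝ} {c x : ℝ}

lemma mul_one_sub_div_pow_le_of_step (hx : 0 ≤ x)
    (hstep : ∀ a b, 0 ≤ a → a ≤ b → b ≤ x → S a * (1 - c * (b - a)) ≤ S b)
    {n : ℕ} (hn : 0 < n) (hcn : c * x ≤ n) : S 0 * (1 - c * x / n) ^ n ≤ S x := by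
  have hn' : (0 : ℝ) < n := Nat.cast_pos.mpr hn
  have hfactor : 0 ≤ 1 - c * (x / n) := by
    rw [← mul_div_assoc, sub_nonneg, div_le_one hn']; exact hcn
  have key : ∀ k ≤ n, S 0 * (1 - c * (x / n)) ^ k ≤ S (k * (x / n)) := by
    intro k hk
    induction k with
    | zero => simp
    | succ k ih =>
      have hkx : ((k + 1 : ℕ) : ℝ) * (x / n) ≤ x := by
        rw [← mul_div_assoc, div_le_iff₀ hn', mul_comm]
        exact mul_le_mul_of_nonneg_left (by exact_mod_cast hk) hx
      calc S 0 * (1 - c * (x / n)) ^ (k + 1)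
          = S 0 * (1 - c * (x / n)) ^ k * (1 - c * (x / n)) := by ring
        _ ≤ S (k * (x / n)) * (1 - c * ((k + 1 : ℕ) * (x / n) - k * (x / n))) := by
          push_cast
          rw [add_mul, one_mul, add_sub_cancel_left]
          exact mul_le_mul_of_nonneg_right (ih (by omega)) hfactor
        _ ≤ S ((k + 1 : ℕ) * (x / n)) :=
          hstep _ _ (by positivity) (by gcongr; simp) hkx
  simpa [mul_div_assoc, mul_div_cancel₀ x hn'.ne'] using key n le_rfl

lemma mul_exp_neg_le_of_step (hx : 0 ≤ x)
    (hstep : ∀ a b, 0 ≤ a → a ≤ b → b ≤ x → S a * (1 - c * (b - a)) ≤ S b) :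
    S 0 * Real.exp (-(c * x)) ≤ S x := by
  have hlim := (Real.tendsto_one_add_div_pow_exp (-(c * x))).const_mul (S 0)
  refine le_of_tendsto hlim ?_
  filter_upwards [eventually_ge_atTop 1, eventually_ge_atTop ⌈c * x⌉₊] with n hn hcn
  rw [neg_div, ← sub_eq_add_neg]
  exact mul_one_sub_div_pow_le_of_step hx hstep hn (Nat.ceil_le.mp hcn)

end Gronwall

lemma measureReal_withDensity_ofReal_Ioc_le {f : ℝ → ℝ} {a b C : ℝ} (hab : a ≤ b) (hC : 0 ≤ C)
    (hfC : ∀ t ∈ Ioc a b, f t ≤ C) :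
    (volume.withDensity fun t => ENNReal.ofReal (f t)).real (Ioc a b) ≤ C * (b - a) := by
  refine ENNReal.toReal_le_of_le_ofReal (by nlinarith) ?_
  rw [withDensity_apply _ measurableSet_Ioc]
  calc ∫⁻ t in Ioc a b, ENNReal.ofReal (f t)
      ≤ ∫⁻ _ in Ioc a b, ENNReal.ofReal C :=
        setLIntegral_mono measurable_const fun t ht => ENNReal.ofReal_le_ofReal (hfC t ht)
    _ = ENNReal.ofReal (C * (b - a)) := by
        rw [setLIntegral_const, Real.volume_Ioc, ENNReal.ofReal_mul hC]

section Tail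

variable {μ : Measure ℝ} [IsFiniteMeasure μ]

lemma measureReal_Ioi_eq_Ioc_add_Ioi {a b : ℝ} (hab : a ≤ b) :
    μ.real (Ioi a) = μ.real (Ioc a b) + μ.real (Ioi b) := by
  rw [← Ioc_union_Ioi_eq_Ioi hab, measureReal_union (Ioc_disjoint_Ioi le_rfl) measurableSet_Ioi]

lemma IsMHR.density_le_hazard_mul {f : ℝ → ℝ} (hmhr : IsMHR f μ) {t x : ℝ} (htx : t ≤ x)
    (hx : μ (Ioi x) ≠ 0) : f t ≤ f x / μ.real (Ioi x) * μ.real (Ioi t) := by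
  have ht : 0 < μ.real (Ioi t) :=
    ENNReal.toReal_pos (fun h0 => hx (measure_mono_null (Ioi_subset_Ioi htx) h0)) (by finiteness)
  exact (div_le_iff₀ ht).mp (hmhr t x htx hx)

lemma IsMHR.tail_mul_one_sub_le {f : ℝ → ℝ} (hf : ∀ t, 0 ≤ f t)
    (hdens : μ = volume.withDensity fun t => ENNReal.ofReal (f t)) (hmhr : IsMHR f μ)
    {a b x : ℝ} (hab : a ≤ b) (hbx : b ≤ x) (hx : μ (Ioi x) ≠ 0) :
    μ.real (Ioi a) * (1 - f x / μ.real (Ioi x) * (b - a)) ≤ μ.real (Ioi b) := by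
  set h := f x / μ.real (Ioi x)
  have hh : 0 ≤ h := div_nonneg (hf x) measureReal_nonneg
  have hfa : ∀ t ∈ Ioc a b, f t ≤ h * μ.real (Ioi a) := fun t ht =>
    calc f t ≤ h * μ.real (Ioi t) := hmhr.density_le_hazard_mul (ht.2.trans hbx) hx
      _ ≤ h * μ.real (Ioi a) :=
        mul_le_mul_of_nonneg_left (measureReal_mono (Ioi_subset_Ioi ht.1.le)) hh
  have hIoc := measureReal_withDensity_ofReal_Ioc_le hab (by positivity) hfa
  rw [← hdens] at hIoc
  linarith [measureReal_Ioi_eq_Ioc_add_Ioi (μ := μ) hab]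

end Tail

section Quantile

variable {μ : Measure ℝ} [IsProbabilityMeasure μ]

lemma quantileFn_eq_sInf_cdf (q : ℝ) : quantileFn μ q = sInf {v | q ≤ cdf μ v} := by
  simp only [quantileFn, cdf_eq_real, measureReal_def]

lemma le_cdf_of_quantileFn_le {q x : ℝ} (hq : q < 1) (hx : quantileFn μ q ≤ x) :
    q ≤ cdf μ x := by
  rw [quantileFn_eq_sInf_cdf] at hx
  have hne : {v | q ≤ cdf μ v}.Nonempty :=
    ((tendsto_cdf_atTop μ).eventually (eventually_ge_nhds hq)).exists
  have hright : ∀ y ∈ Ioi x, q ≤ cdf μ y := fun y hy => by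
    obtain ⟨v, hv, hvy⟩ := exists_lt_of_csInf_lt hne (hx.trans_lt hy)
    exact hv.trans (monotone_cdf μ hvy.le)
  exact ge_of_tendsto (((cdf μ).right_continuous x).mono Ioi_subset_Ici_self)
    (eventually_nhdsWithin_of_forall hright)

lemma measureReal_Ioi_eq_one_sub_cdf (x : ℝ) : μ.real (Ioi x) = 1 - cdf μ x := by
  rw [cdf_eq_real, ← compl_Iic, probReal_compl_eq_one_sub measurableSet_Iic]

end Quantile

theorem hazard_rate_lower_bound_from_quantile
    (f : ℝ → ℝ) (hf : ∀ t, 0 ≤ f t)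
    (μ : Measure ℝ) (hdens : μ = volume.withDensity (fun t => ENNReal.ofReal (f t)))
    (hprob : IsProbabilityMeasure μ) (hnonneg : μ (Set.Iio 0) = 0)
    (hmhr : IsMHR f μ)
    (q : ℝ) (hq : q ∈ Set.Ioo (0 : ℝ) 1)
    (x : ℝ) (hx : 0 < x) (hquant : quantileFn μ q ≤ x) (hsupp : μ (Set.Ioi x) ≠ 0) :
    -Real.log (1 - q) / x ≤ f x / (μ (Set.Ioi x)).toReal := by
  have hac : μ ≪ volume := hdens ▸ withDensity_absolutelyContinuous _ _
  have htail_zero : μ.real (Ioi 0) = 1 := by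
    rw [measureReal_Ioi_eq_one_sub_cdf, cdf_eq_real, measureReal_def,
      ← measure_congr (Iio_ae_eq_Iic' (hac Real.volume_singleton)), hnonneg]
    simp
  have hexp : Real.exp (-(f x / μ.real (Ioi x) * x)) ≤ μ.real (Ioi x) := by
    simpa [htail_zero] using mul_exp_neg_le_of_step hx.le
      fun a b _ hab hbx => hmhr.tail_mul_one_sub_le hf hdens hab hbx hsupp
  have htail_x : μ.real (Ioi x) ≤ 1 - q := by
    linarith [measureReal_Ioi_eq_one_sub_cdf (μ := μ) x, le_cdf_of_quantileFn_le hq.2 hquant]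
  have hlog : -(f x / μ.real (Ioi x) * x) ≤ Real.log (1 - q) :=
    (Real.le_log_iff_exp_le (by linarith [hq.2])).mpr (hexp.trans htail_x)
  change -Real.log (1 - q) / x ≤ f x / μ.real (Ioi x)
  rw [div_le_iff₀ hx]
  linarith
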